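/- For two vertices of Q_{2p+1} of the form u = parity(A₁) · A₁ · (s₁ ⊕ A₁) and w = parity(A₂) · A₂ · (s₂ ⊕ A₂) with A₁, A₂ ∈ {0,1}^p and s₁, s₂ in an independent set S_p of Q_p, the Hamming distance d_H(u, w) ≥ 2 whenever u ≠ w. -/

import Mathlib

/-- The n-dimensional hypercube graph on binary n-tuples, adjacency = Hamming distance 1. -/
def Q (n : ℕ) : SimpleGraph (Fin n → Bool) where
  Adj u v := hammingDist u v = 1
  symm := ⟨fun (u v : Fin n → Bool) (h : hammingDist u v = 1) =>
    show hammingDist v u = 1 by rwa [hammingDist_comm]⟩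
  loopless := ⟨fun u h => by simp at h⟩

instance (n : ℕ) : DecidableRel (Q n).Adj := fun u v =>
  inferInstanceAs (Decidable (hammingDist u v = 1))

/-- S is an independent set of Q n. -/
def IsIndep {n : ℕ} (S : Set (Fin n → Bool)) : Prop :=
  ∀ u ∈ S, ∀ v ∈ S, ¬ (Q n).Adj u v

/-- S is a dominating set of Q n. -/
def IsDom {n : ℕ} (S : Set (Fin n → Bool)) : Prop :=
  ∀ v, v ∉ S → ∃ u ∈ S, (Q n).Adj u v

/-- The independent domination number of Q n. -/
noncomputable def alpha (n : ℕ) : ℕ :=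
  sInf {m | ∃ S : Finset (Fin n → Bool),
    IsIndep (S : Set (Fin n → Bool)) ∧ IsDom (S : Set (Fin n → Bool)) ∧ S.card = m}

/-- The parity (mod-2 sum of bits) of a binary p-tuple. -/
def parity {p : ℕ} (A : Fin p → Bool) : Bool :=
  decide (Odd (Finset.univ.filter (fun i => A i = true)).card)

/-- The vertex parity(A) · A · (s ⊕ A) of Q_{2p+1} (written as Q_{1+(p+p)}). -/
def doubleVec {p : ℕ} (A s : Fin p → Bool) : Fin (1 + (p + p)) → Bool :=
  Fin.append (fun _ : Fin 1 => parity A) (Fin.append A (fun i => xor (s i) (A i)))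

/-- The set { parity(A) · A · (s ⊕ A) : A ∈ {0,1}^p, s ∈ S }. -/
def doubleSet {p : ℕ} (S : Finset (Fin p → Bool)) :
    Finset (Fin (1 + (p + p)) → Bool) :=
  (Finset.univ ×ˢ S).image (fun x => doubleVec x.1 x.2)


/-- Index of the middle block. -/
def midIdx {p : ℕ} (i : Fin p) : Fin (1 + (p + p)) := Fin.natAdd 1 (Fin.castAdd p i)
/-- Index of the third block. -/
def thrIdx {p : ℕ} (i : Fin p) : Fin (1 + (p + p)) := Fin.natAdd 1 (Fin.natAdd p i)

lemma midIdx_ne_thrIdx {p : ℕ} (i j : Fin p) : midIdx i ≠ thrIdx j := by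
  have := i.isLt
  simp [midIdx, thrIdx, Fin.ext_iff]; omega

lemma midIdx_inj {p : ℕ} {i j : Fin p} (h : i ≠ j) : midIdx i ≠ midIdx j := by
  simp [midIdx, Fin.ext_iff] at *; omega

lemma thrIdx_inj {p : ℕ} {i j : Fin p} (h : i ≠ j) : thrIdx i ≠ thrIdx j := by
  simp [thrIdx, Fin.ext_iff] at *; omega

lemma doubleVec_mid {p : ℕ} (A s : Fin p → Bool) (i : Fin p) :
    doubleVec A s (midIdx i) = A i := by
  simp [doubleVec, midIdx, Fin.append_right, Fin.append_left]

lemma doubleVec_thr {p : ℕ} (A s : Fin p → Bool) (i : Fin p) :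
    doubleVec A s (thrIdx i) = xor (s i) (A i) := by
  unfold doubleVec thrIdx
  rw [Fin.append_right, Fin.append_right]

lemma two_le_hamming {n : ℕ} (u v : Fin n → Bool) (i j : Fin n) (hij : i ≠ j)
    (hiuv : u i ≠ v i) (hjuv : u j ≠ v j) : 2 ≤ hammingDist u v := by
  have hsub : ({i, j} : Finset (Fin n)) ⊆ Finset.univ.filter (fun k => u k ≠ v k) := by
    intro k hk
    simp only [Finset.mem_insert, Finset.mem_singleton] at hk
    rcases hk with rfl | rfl <;> simp [hiuv, hjuv]
  calc 2 = ({i, j} : Finset (Fin n)).card := by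
        rw [Finset.card_insert_of_notMem (by simp [hij]), Finset.card_singleton]
    _ ≤ _ := Finset.card_le_card hsub
    _ = hammingDist u v := rfl

lemma xor_ne_xor {a b c : Bool} (h : a ≠ b) : xor a c ≠ xor b c := by
  revert h; cases a <;> cases b <;> cases c <;> decide

/-- From an independent set, two distinct members differ in two distinct coordinates. -/
lemma indep_two_diffs {p : ℕ} (S : Finset (Fin p → Bool))
    (hi : IsIndep (S : Set (Fin p → Bool))) {s₁ s₂ : Fin p → Bool}
    (hs₁ : s₁ ∈ S) (hs₂ : s₂ ∈ S) (hne : s₁ ≠ s₂) :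
    ∃ j k : Fin p, j ≠ k ∧ s₁ j ≠ s₂ j ∧ s₁ k ≠ s₂ k := by
  have hadj : hammingDist s₁ s₂ ≠ 1 := hi s₁ (by simpa using hs₁) s₂ (by simpa using hs₂)
  have hpos : 0 < hammingDist s₁ s₂ := hammingDist_pos.mpr hne
  have h2 : 1 < (Finset.univ.filter (fun k => s₁ k ≠ s₂ k)).card := by
    have : 2 ≤ hammingDist s₁ s₂ := by omega
    exact this
  obtain ⟨j, hj, k, hk, hjk⟩ := Finset.one_lt_card.mp h2
  simp only [Finset.mem_filter] at hj hk
  exact ⟨j, k, hjk, hj.2, hk.2⟩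

/-- Two distinct vertices of the form parity(A) · A · (s ⊕ A), with s ranging
    over an independent set S_p of Q_p, have Hamming distance at least 2. -/
theorem doubleVec_dist_ge_two {p : ℕ} (S : Finset (Fin p → Bool))
    (hi : IsIndep (S : Set (Fin p → Bool)))
    (A₁ A₂ s₁ s₂ : Fin p → Bool) (hs₁ : s₁ ∈ S) (hs₂ : s₂ ∈ S)
    (hne : doubleVec A₁ s₁ ≠ doubleVec A₂ s₂) :
    2 ≤ hammingDist (doubleVec A₁ s₁) (doubleVec A₂ s₂)  := by
  classical
  by_cases hA : ∃ i j : Fin p, i ≠ j ∧ A₁ i ≠ A₂ i ∧ A₁ j ≠ A₂ j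
  · obtain ⟨i, j, hij, h1, h2⟩ := hA
    refine two_le_hamming _ _ (midIdx i) (midIdx j) (midIdx_inj hij) ?_ ?_ <;>
      simp [doubleVec_mid, h1, h2]
  · push_neg at hA
    by_cases hA2 : A₁ = A₂
    · subst hA2
      have hs : s₁ ≠ s₂ := fun h => hne (by rw [h])
      obtain ⟨j, k, hjk, hj, hk⟩ := indep_two_diffs S hi hs₁ hs₂ hs
      refine two_le_hamming _ _ (thrIdx j) (thrIdx k) (thrIdx_inj hjk) ?_ ?_ <;>
        simp only [doubleVec_thr]
      · exact xor_ne_xor hj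
      · exact xor_ne_xor hk
    · obtain ⟨i, hiA⟩ := Function.ne_iff.mp hA2
      have hrest : ∀ j, j ≠ i → A₁ j = A₂ j := by
        intro j hji
        by_contra hj
        exact hiA (hA j i hji hj)
      by_cases hsI : s₁ i = s₂ i
      · refine two_le_hamming _ _ (midIdx i) (thrIdx i) (midIdx_ne_thrIdx i i) ?_ ?_
        · simpa [doubleVec_mid] using hiA
        · simp only [doubleVec_thr, hsI]
          intro h
          exact hiA (by
            have := h
            cases hb : s₂ i <;> simp [hb] at this <;> simp [this]
            )
      · have hs : s₁ ≠ s₂ := fun h => hsI (by rw [h])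
        obtain ⟨j, k, hjk, hj, hk⟩ := indep_two_diffs S hi hs₁ hs₂ hs
        have hone : j ≠ i ∨ k ≠ i := by
          rcases eq_or_ne j i with rfl | h
          · exact Or.inr (fun h' => hjk (h' ▸ rfl))
          · exact Or.inl h
        obtain ⟨m, hmi, hm⟩ : ∃ m, m ≠ i ∧ s₁ m ≠ s₂ m := by
          rcases hone with h | h
          · exact ⟨j, h, hj⟩
          · exact ⟨k, h, hk⟩
        refine two_le_hamming _ _ (midIdx i) (thrIdx m) (midIdx_ne_thrIdx i m) ?_ ?_
        · simpa [doubleVec_mid] using hiA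
        · simp only [doubleVec_thr, hrest m hmi]
          exact xor_ne_xor hm
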